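/- Let η ∈ ℝ. Suppose E₁, E₂ : ℝ × ℝ² → ℂ and n : ℝ × ℝ² → ℝ are infinitely differentiable, and there is R > 0 such that E₁(t,x) = E₂(t,x) = 0 whenever |x| ≥ R. Suppose that for all (t,x) ∈ ℝ × ℝ²: i·∂ₜE₁ + ΔE₁ − n·E₁ + η·E₂·(E₁·conj(E₂) − conj(E₁)·E₂) = 0 and i·∂ₜE₂ + ΔE₂ − n·E₂ + η·E₁·(conj(E₁)·E₂ − E₁·conj(E₂)) = 0, where Δ is the Laplacian in the spatial variables x. Then the total mass t ↦ ∫_{ℝ²}(|E₁(t,x)|² + |E₂(t,x)|²) dx is constant: for all t, s ∈ ℝ, ∫_{ℝ²}(|E₁(t,x)|² + |E₂(t,x)|²) dx = ∫_{ℝ²}(|E₁(s,x)|² + |E₂(s,x)|²) dx. -/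

import Mathlib

open MeasureTheory Filter Metric Set
open scoped ENNReal

noncomputable section

/-- The plane `ℝ²`. -/
abbrev R2 := EuclideanSpace ℝ (Fin 2)

/-- `i`-th standard basis vector of `ℝ²`. -/
def e (i : Fin 2) : R2 := EuclideanSpace.single i 1

/-- The Laplacian of a complex-valued function on `ℝ²`. -/
def lapC (f : R2 → ℂ) (x : R2) : ℂ :=
  ∑ i : Fin 2, fderiv ℝ (fun y => fderiv ℝ f y (e i)) x (e i)

lemma smooth_cpt_lipschitz {f : R2 → ℝ} (hf : ContDiff ℝ (⊤ : ℕ∞) f) (h : HasCompactSupport f) :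
    ∃ C : NNReal, LipschitzWith C f := by
  obtain ⟨C, hC⟩ := (hf.continuous_fderiv (by simp)).bounded_above_of_compact_support (h.fderiv (𝕜 := ℝ))
  refine ⟨C.toNNReal, lipschitzWith_of_nnnorm_fderiv_le (𝕜 := ℝ) (hf.differentiable (by simp)) fun x => ?_⟩
  rw [← NNReal.coe_le_coe, coe_nnnorm, Real.coe_toNNReal']
  exact (hC x).trans (le_max_left _ _)

lemma integral_lineDeriv_eq_zero {f : R2 → ℝ} (hf : ContDiff ℝ (⊤ : ℕ∞) f) {R : ℝ} (hR : 0 < R)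
    (h0 : ∀ x : R2, R ≤ ‖x‖ → f x = 0) (v : R2) :
    ∫ x, lineDeriv ℝ f x v = 0 := by
  have hfc : HasCompactSupport f := by
    apply HasCompactSupport.intro (isCompact_closedBall (0 : R2) R)
    intro x hx
    exact h0 x (le_of_lt (by simpa [dist_eq_norm] using hx))
  obtain ⟨C, hfl⟩ := smooth_cpt_lipschitz hf hfc
  set φ : ContDiffBump (0 : R2) := ⟨R + 1, R + 2, by linarith, by linarith⟩
  have hφc : HasCompactSupport (φ : R2 → ℝ) := φ.hasCompactSupport
  obtain ⟨D, hφl⟩ := smooth_cpt_lipschitz φ.contDiff hφc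
  have key := hfl.integral_lineDeriv_mul_eq (μ := volume) hφl hφc v
  have hL : ∀ x : R2, lineDeriv ℝ f x v * φ x = lineDeriv ℝ f x v := by
    intro x
    rcases le_or_gt ‖x‖ (R + 1) with hx | hx
    · rw [φ.one_of_mem_closedBall (by simpa [dist_eq_norm] using hx), mul_one]
    · have : lineDeriv ℝ f x v = 0 := by
        have hev : f =ᶠ[nhds x] (fun _ => 0) := by
          have hs : IsOpen {y : R2 | R < ‖y‖} := isOpen_lt continuous_const continuous_norm
          filter_upwards [hs.mem_nhds (by simp only [mem_setOf_eq]; linarith)] with y hy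
          exact h0 y hy.le
        rw [(hf.differentiable (by simp) x).lineDeriv_eq_fderiv, hev.fderiv_eq]
        simp
      simp [this]
  have hRz : ∀ x : R2, lineDeriv ℝ (φ : R2 → ℝ) x (-v) * f x = 0 := by
    intro x
    rcases le_or_gt R ‖x‖ with hx | hx
    · simp [h0 x hx]
    · have : lineDeriv ℝ (φ : R2 → ℝ) x (-v) = 0 := by
        have hev : (φ : R2 → ℝ) =ᶠ[nhds x] (fun _ => 1) := by
          have := φ.eventuallyEq_one_of_mem_ball (x := x)
            (by simp only [mem_ball, dist_zero_right]; linarith)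
          exact this
        rw [((φ.contDiff (n := (⊤ : ℕ∞))).differentiable (by simp) x).lineDeriv_eq_fderiv,
          hev.fderiv_eq]
        simp
      simp [this]
  calc ∫ x, lineDeriv ℝ f x v = ∫ x, lineDeriv ℝ f x v * φ x := by
        simp_rw [hL]
    _ = ∫ x, lineDeriv ℝ (φ : R2 → ℝ) x (-v) * f x := key
    _ = 0 := by simp_rw [hRz]; simp

lemma hasDerivAt_normSq_comp {u : ℝ → ℂ} {u' : ℂ} {t : ℝ} (hu : HasDerivAt u u' t) :
    HasDerivAt (fun s => ‖u s‖ ^ 2) (2 * ((starRingEnd ℂ) (u t) * u').re) t := by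
  have hre : HasDerivAt (fun s => (u s).re) u'.re t :=
    Complex.reCLM.hasFDerivAt.comp_hasDerivAt t hu
  have him : HasDerivAt (fun s => (u s).im) u'.im t :=
    Complex.imCLM.hasFDerivAt.comp_hasDerivAt t hu
  have h := (hre.mul hre).add (him.mul him)
  have heq : (fun s => ‖u s‖ ^ 2) = fun s => (u s).re * (u s).re + (u s).im * (u s).im := by
    funext s
    rw [Complex.sq_norm, Complex.normSq_apply]
  rw [heq]
  refine h.congr_deriv (Eq.symm ?_)
  simp [Complex.mul_re, Complex.conj_re, Complex.conj_im]
  ring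

lemma lapC_joint {F : ℝ × R2 → ℂ} (hF : ContDiff ℝ (⊤ : ℕ∞) F) (t : ℝ) (x : R2) :
    lapC (fun y => F (t, y)) x =
      ∑ i : Fin 2, fderiv ℝ (fun p => fderiv ℝ F p ((0 : ℝ), e i)) (t, x) ((0 : ℝ), e i) := by
  have hdF : Differentiable ℝ F := hF.differentiable (by simp)
  have step1 : ∀ (y : R2) (i : Fin 2),
      fderiv ℝ (fun y' => F (t, y')) y (e i) = fderiv ℝ F (t, y) ((0 : ℝ), e i) := by
    intro y i
    have h : HasFDerivAt (fun y' => F (t, y'))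
        ((fderiv ℝ F (t, y)).comp (ContinuousLinearMap.inr ℝ ℝ R2)) y :=
      (hdF (t, y)).hasFDerivAt.comp y (hasFDerivAt_prodMk_right t y)
    rw [h.fderiv]
    rfl
  have hG : ∀ i : Fin 2, ContDiff ℝ (⊤ : ℕ∞) (fun p => fderiv ℝ F p ((0 : ℝ), e i)) := fun i =>
    (hF.fderiv_right (m := (⊤ : ℕ∞)) (by simp)).clm_apply contDiff_const
  rw [lapC]
  refine Finset.sum_congr rfl fun i _ => ?_
  have hcongr : (fun y => fderiv ℝ (fun y' => F (t, y')) y (e i)) =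
      fun y => fderiv ℝ F (t, y) ((0 : ℝ), e i) := by
    funext y; exact step1 y i
  rw [hcongr]
  have h2 : HasFDerivAt (fun y => fderiv ℝ F (t, y) ((0 : ℝ), e i))
      ((fderiv ℝ (fun p => fderiv ℝ F p ((0 : ℝ), e i)) (t, x)).comp
        (ContinuousLinearMap.inr ℝ ℝ R2)) x :=
    (((hG i).differentiable (by simp)) (t, x)).hasFDerivAt.comp x
      (hasFDerivAt_prodMk_right t x)
  rw [h2.fderiv]
  rfl

lemma integral_re_I_conj_lap {f : R2 → ℂ} (hf : ContDiff ℝ (⊤ : ℕ∞) f) {R : ℝ} (hR : 0 < R)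
    (h0 : ∀ x : R2, R ≤ ‖x‖ → f x = 0) :
    ∫ x, (Complex.I * (starRingEnd ℂ) (f x) * lapC f x).re = 0 := by
  set D : Fin 2 → R2 → ℂ := fun i x => fderiv ℝ f x (e i) with hDdef
  have hD : ∀ i, ContDiff ℝ (⊤ : ℕ∞) (D i) := fun i =>
    (hf.fderiv_right (by simp)).clm_apply contDiff_const
  set W : Fin 2 → R2 → ℝ := fun i x => (Complex.I * (starRingEnd ℂ) (f x) * D i x).re with hWdef
  have hW : ∀ i, ContDiff ℝ (⊤ : ℕ∞) (W i) := fun i =>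
    Complex.reCLM.contDiff.comp
      ((contDiff_const.mul (Complex.conjCLE.contDiff.comp hf)).mul (hD i))
  have hW0 : ∀ i, ∀ x : R2, R ≤ ‖x‖ → W i x = 0 := by
    intro i x hx; simp [hWdef, h0 x hx]
  -- pointwise identity for the line derivative
  have hpt : ∀ i x, lineDeriv ℝ (W i) x (e i) =
      (Complex.I * ((starRingEnd ℂ) (f x) * fderiv ℝ (D i) x (e i))).re := by
    intro i x
    have hfd : HasFDerivAt f (fderiv ℝ f x) x :=
      (hf.differentiable (by simp) x).hasFDerivAt
    have hconj : HasFDerivAt (fun y => (starRingEnd ℂ) (f y))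
        ((Complex.conjCLE.toContinuousLinearMap).comp (fderiv ℝ f x)) x :=
      Complex.conjCLE.toContinuousLinearMap.hasFDerivAt.comp x hfd
    have hDd : HasFDerivAt (D i) (fderiv ℝ (D i) x) x :=
      ((hD i).differentiable (by simp) x).hasFDerivAt
    have hu : HasFDerivAt (fun y => Complex.I * (starRingEnd ℂ) (f y))
        (Complex.I • ((Complex.conjCLE.toContinuousLinearMap).comp (fderiv ℝ f x))) x :=
      hconj.const_mul Complex.I
    have hmul := hu.mul hDd
    have hre := Complex.reCLM.hasFDerivAt.comp x hmul
    have hre' : HasFDerivAt (W i)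
        (Complex.reCLM.comp
          ((Complex.I * (starRingEnd ℂ) (f x)) • fderiv ℝ (D i) x +
            D i x • Complex.I • ((Complex.conjCLE.toContinuousLinearMap).comp (fderiv ℝ f x)))) x :=
      hre
    have h1 : lineDeriv ℝ (W i) x (e i) = fderiv ℝ (W i) x (e i) :=
      hre'.differentiableAt.lineDeriv_eq_fderiv
    have hfe : fderiv ℝ f x (e i) = D i x := rfl
    rw [h1, hre'.fderiv]
    simp only [ContinuousLinearMap.coe_comp', Function.comp_apply,
      ContinuousLinearMap.add_apply, ContinuousLinearMap.smul_apply, smul_eq_mul,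
      ContinuousLinearMap.coe_smul', Pi.smul_apply, Complex.reCLM_apply,
      ContinuousLinearEquiv.coe_coe, Complex.conjCLE_apply, hfe]
    simp only [Complex.add_re, Complex.mul_re, Complex.mul_im, Complex.conj_re, Complex.conj_im,
      Complex.I_re, Complex.I_im]
    ring
  have hDc : ∀ i, Continuous fun x =>
      (Complex.I * ((starRingEnd ℂ) (f x) * fderiv ℝ (D i) x (e i))).re := by
    intro i
    apply Complex.continuous_re.comp
    exact (continuous_const.mul ((Complex.conjCLE.continuous.comp
      (hf.continuous)).mul
      ((((hD i).fderiv_right (m := (⊤:ℕ∞)) (by simp)).clm_apply contDiff_const).continuous)))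
  have hint : ∀ i, Integrable (fun x => lineDeriv ℝ (W i) x (e i)) := by
    intro i
    have : (fun x => lineDeriv ℝ (W i) x (e i)) =
        fun x => (Complex.I * ((starRingEnd ℂ) (f x) * fderiv ℝ (D i) x (e i))).re := by
      funext x; exact hpt i x
    rw [this]
    apply Continuous.integrable_of_hasCompactSupport (hDc i)
    apply HasCompactSupport.intro (isCompact_closedBall (0 : R2) R)
    intro x hx
    have hx' : R ≤ ‖x‖ := le_of_lt (by simpa [dist_eq_norm] using hx)
    simp [h0 x hx']
  calc ∫ x, (Complex.I * (starRingEnd ℂ) (f x) * lapC f x).re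
      = ∫ x, ∑ i : Fin 2, lineDeriv ℝ (W i) x (e i) := by
        congr 1; funext x
        simp_rw [hpt]
        rw [lapC, mul_assoc]
        simp only [Finset.mul_sum, Complex.re_sum]
        rfl
    _ = ∑ i : Fin 2, ∫ x, lineDeriv ℝ (W i) x (e i) :=
        integral_finset_sum _ (fun i _ => hint i)
    _ = 0 := Finset.sum_eq_zero fun i _ =>
        integral_lineDeriv_eq_zero (hW i) hR (hW0 i) (e i)

theorem mass_conservation (η : ℝ)
    (E₁ E₂ : ℝ × R2 → ℂ) (n : ℝ × R2 → ℝ)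
    (hE₁ : ContDiff ℝ (⊤ : ℕ∞) E₁) (hE₂ : ContDiff ℝ (⊤ : ℕ∞) E₂) (hn : ContDiff ℝ (⊤ : ℕ∞) n)
    (R : ℝ) (hR : 0 < R)
    (hsupp : ∀ (t : ℝ) (x : R2), R ≤ ‖x‖ → E₁ (t, x) = 0 ∧ E₂ (t, x) = 0)
    (heq₁ : ∀ (t : ℝ) (x : R2),
      Complex.I * deriv (fun s => E₁ (s, x)) t + lapC (fun y => E₁ (t, y)) x
        - (n (t, x) : ℂ) * E₁ (t, x)
        + (η : ℂ) * E₂ (t, x) *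
          (E₁ (t, x) * (starRingEnd ℂ) (E₂ (t, x))
            - (starRingEnd ℂ) (E₁ (t, x)) * E₂ (t, x)) = 0)
    (heq₂ : ∀ (t : ℝ) (x : R2),
      Complex.I * deriv (fun s => E₂ (s, x)) t + lapC (fun y => E₂ (t, y)) x
        - (n (t, x) : ℂ) * E₂ (t, x)
        + (η : ℂ) * E₁ (t, x) *
          ((starRingEnd ℂ) (E₁ (t, x)) * E₂ (t, x)
            - E₁ (t, x) * (starRingEnd ℂ) (E₂ (t, x))) = 0) :
    ∀ t s : ℝ,
      ∫ x, (‖E₁ (t, x)‖ ^ 2 + ‖E₂ (t, x)‖ ^ 2) =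
        ∫ x, (‖E₁ (s, x)‖ ^ 2 + ‖E₂ (s, x)‖ ^ 2) := by
  have hE₁' : ContDiff ℝ (⊤ : ℕ∞) E₁ := hE₁.of_le (by simp)
  have hE₂' : ContDiff ℝ (⊤ : ℕ∞) E₂ := hE₂.of_le (by simp)
  set Λ₁ : ℝ × R2 → ℂ :=
    fun p => ∑ i : Fin 2, fderiv ℝ (fun q => fderiv ℝ E₁ q ((0 : ℝ), e i)) p ((0 : ℝ), e i)
    with hΛ₁def
  set Λ₂ : ℝ × R2 → ℂ :=
    fun p => ∑ i : Fin 2, fderiv ℝ (fun q => fderiv ℝ E₂ q ((0 : ℝ), e i)) p ((0 : ℝ), e i)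
    with hΛ₂def
  have hΛc : ∀ (E : ℝ × R2 → ℂ), ContDiff ℝ (⊤ : ℕ∞) E → Continuous
      (fun p => ∑ i : Fin 2, fderiv ℝ (fun q => fderiv ℝ E q ((0 : ℝ), e i)) p ((0 : ℝ), e i)) := by
    intro E hE
    apply continuous_finset_sum
    intro i _
    have hG : ContDiff ℝ (⊤ : ℕ∞) (fun q => fderiv ℝ E q ((0 : ℝ), e i)) :=
      (hE.fderiv_right (m := (⊤ : ℕ∞)) (by simp)).clm_apply contDiff_const
    exact ((hG.fderiv_right (m := (⊤ : ℕ∞)) (by simp)).clm_apply contDiff_const).continuous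
  have hΛ₁c : Continuous Λ₁ := hΛc E₁ hE₁'
  have hΛ₂c : Continuous Λ₂ := hΛc E₂ hE₂'
  set Φ : ℝ × R2 → ℝ := fun p =>
    2 * (Complex.I * (starRingEnd ℂ) (E₁ p) * Λ₁ p).re
      + 2 * (Complex.I * (starRingEnd ℂ) (E₂ p) * Λ₂ p).re with hΦdef
  have hΦc : Continuous Φ := by
    apply Continuous.add
    · exact (continuous_const.mul (Complex.continuous_re.comp
        ((continuous_const.mul (Complex.conjCLE.continuous.comp hE₁'.continuous)).mul hΛ₁c)))
    · exact (continuous_const.mul (Complex.continuous_re.comp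
        ((continuous_const.mul (Complex.conjCLE.continuous.comp hE₂'.continuous)).mul hΛ₂c)))
  have hΦ0 : ∀ (τ : ℝ) (x : R2), R ≤ ‖x‖ → Φ (τ, x) = 0 := by
    intro τ x hx
    simp [hΦdef, (hsupp τ x hx).1, (hsupp τ x hx).2]
  -- pointwise time derivative
  have hderiv : ∀ (t₀ : ℝ) (x : R2),
      HasDerivAt (fun τ => ‖E₁ (τ, x)‖ ^ 2 + ‖E₂ (τ, x)‖ ^ 2) (Φ (t₀, x)) t₀ := by
    intro t₀ x
    have hcurve : ContDiff ℝ (⊤ : ℕ∞) (fun τ : ℝ => ((τ, x) : ℝ × R2)) :=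
      contDiff_id.prodMk contDiff_const
    have hu₁ : HasDerivAt (fun τ => E₁ (τ, x)) (deriv (fun τ => E₁ (τ, x)) t₀) t₀ :=
      (((hE₁'.comp hcurve).differentiable (by simp)) t₀).hasDerivAt
    have hu₂ : HasDerivAt (fun τ => E₂ (τ, x)) (deriv (fun τ => E₂ (τ, x)) t₀) t₀ :=
      (((hE₂'.comp hcurve).differentiable (by simp)) t₀).hasDerivAt
    have h1 := hasDerivAt_normSq_comp hu₁
    have h2 := hasDerivAt_normSq_comp hu₂
    have htot := h1.add h2
    have hd₁ : deriv (fun τ => E₁ (τ, x)) t₀ =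
        Complex.I * (lapC (fun y => E₁ (t₀, y)) x - (n (t₀, x) : ℂ) * E₁ (t₀, x)
          + (η : ℂ) * E₂ (t₀, x) * (E₁ (t₀, x) * (starRingEnd ℂ) (E₂ (t₀, x))
            - (starRingEnd ℂ) (E₁ (t₀, x)) * E₂ (t₀, x))) := by
      have h := heq₁ t₀ x
      linear_combination (-Complex.I) * h + (deriv (fun τ => E₁ (τ, x)) t₀) * Complex.I_sq
    have hd₂ : deriv (fun τ => E₂ (τ, x)) t₀ =
        Complex.I * (lapC (fun y => E₂ (t₀, y)) x - (n (t₀, x) : ℂ) * E₂ (t₀, x)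
          + (η : ℂ) * E₁ (t₀, x) * ((starRingEnd ℂ) (E₁ (t₀, x)) * E₂ (t₀, x)
            - E₁ (t₀, x) * (starRingEnd ℂ) (E₂ (t₀, x)))) := by
      have h := heq₂ t₀ x
      linear_combination (-Complex.I) * h + (deriv (fun τ => E₂ (τ, x)) t₀) * Complex.I_sq
    refine htot.congr_deriv (Eq.symm ?_)
    have hL₁ : Λ₁ (t₀, x) = lapC (fun y => E₁ (t₀, y)) x := (lapC_joint hE₁' t₀ x).symm
    have hL₂ : Λ₂ (t₀, x) = lapC (fun y => E₂ (t₀, y)) x := (lapC_joint hE₂' t₀ x).symm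
    show 2 * (Complex.I * (starRingEnd ℂ) (E₁ (t₀, x)) * Λ₁ (t₀, x)).re
      + 2 * (Complex.I * (starRingEnd ℂ) (E₂ (t₀, x)) * Λ₂ (t₀, x)).re = _
    rw [hd₁, hd₂, hL₁, hL₂]
    simp only [Complex.mul_re, Complex.mul_im, Complex.add_re, Complex.add_im, Complex.sub_re,
      Complex.sub_im, Complex.conj_re, Complex.conj_im, Complex.I_re, Complex.I_im,
      Complex.ofReal_re, Complex.ofReal_im]
    ring
  -- mass has zero derivative
  have hsupp2 : ∀ (τ : ℝ) (x : R2), R ≤ ‖x‖ → ‖E₁ (τ, x)‖ ^ 2 + ‖E₂ (τ, x)‖ ^ 2 = 0 := by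
    intro τ x hx
    simp [(hsupp τ x hx).1, (hsupp τ x hx).2]
  have hM : ∀ t₀ : ℝ,
      HasDerivAt (fun τ => ∫ x, (‖E₁ (τ, x)‖ ^ 2 + ‖E₂ (τ, x)‖ ^ 2)) 0 t₀ := by
    intro t₀
    have hK : IsCompact ((Icc (t₀ - 1) (t₀ + 1)) ×ˢ closedBall (0 : R2) R) :=
      isCompact_Icc.prod (isCompact_closedBall _ _)
    obtain ⟨C, hC⟩ := hK.exists_bound_of_continuousOn hΦc.continuousOn
    have key := hasDerivAt_integral_of_dominated_loc_of_deriv_le (μ := volume)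
      (F := fun τ x => ‖E₁ (τ, x)‖ ^ 2 + ‖E₂ (τ, x)‖ ^ 2)
      (F' := fun τ x => Φ (τ, x))
      (bound := (closedBall (0 : R2) R).indicator fun _ => C)
      (x₀ := t₀) (s := ball t₀ 1) (ball_mem_nhds t₀ one_pos)
      ?_ ?_ ?_ ?_ ?_ ?_
    · -- conclude
      have hzero : ∫ x, Φ (t₀, x) = 0 := by
        have hint : ∀ (E : ℝ × R2 → ℂ) (Λ : ℝ × R2 → ℂ), Continuous Λ →
            ContDiff ℝ (⊤ : ℕ∞) E → (∀ x : R2, R ≤ ‖x‖ → E (t₀, x) = 0) →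
            Integrable (fun x => (Complex.I * (starRingEnd ℂ) (E (t₀, x)) * Λ (t₀, x)).re) := by
          intro E Λ hΛ hE h0
          apply Continuous.integrable_of_hasCompactSupport
          · exact Complex.continuous_re.comp ((continuous_const.mul (Complex.conjCLE.continuous.comp
              (hE.continuous.comp (Continuous.prodMk_right t₀)))).mul (hΛ.comp (Continuous.prodMk_right t₀)))
          · apply HasCompactSupport.intro (isCompact_closedBall (0 : R2) R)
            intro x hx
            have hx' : R ≤ ‖x‖ := le_of_lt (by simpa [dist_eq_norm] using hx)
            simp [h0 x hx']
        have i1 := hint E₁ Λ₁ hΛ₁c hE₁' (fun x hx => (hsupp t₀ x hx).1)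
        have i2 := hint E₂ Λ₂ hΛ₂c hE₂' (fun x hx => (hsupp t₀ x hx).2)
        have hsplit : ∫ x, Φ (t₀, x) =
            (2 * ∫ x, (Complex.I * (starRingEnd ℂ) (E₁ (t₀, x)) * Λ₁ (t₀, x)).re)
              + 2 * ∫ x, (Complex.I * (starRingEnd ℂ) (E₂ (t₀, x)) * Λ₂ (t₀, x)).re := by
          rw [hΦdef]
          rw [integral_add ((i1.const_mul 2)) ((i2.const_mul 2)),
            integral_const_mul, integral_const_mul]
        rw [hsplit]
        have hv1 : ∫ x, (Complex.I * (starRingEnd ℂ) (E₁ (t₀, x)) * Λ₁ (t₀, x)).re = 0 := by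
          have hcongr : (fun x => (Complex.I * (starRingEnd ℂ) (E₁ (t₀, x)) * Λ₁ (t₀, x)).re) =
              fun x => (Complex.I * (starRingEnd ℂ) (E₁ (t₀, x))
                * lapC (fun y => E₁ (t₀, y)) x).re := by
            funext x; rw [show Λ₁ (t₀, x) = lapC (fun y => E₁ (t₀, y)) x from
              (lapC_joint hE₁' t₀ x).symm]
          rw [hcongr]
          exact integral_re_I_conj_lap (hE₁'.comp (contDiff_const.prodMk contDiff_id)) hR
            (fun x hx => (hsupp t₀ x hx).1)
        have hv2 : ∫ x, (Complex.I * (starRingEnd ℂ) (E₂ (t₀, x)) * Λ₂ (t₀, x)).re = 0 := by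
          have hcongr : (fun x => (Complex.I * (starRingEnd ℂ) (E₂ (t₀, x)) * Λ₂ (t₀, x)).re) =
              fun x => (Complex.I * (starRingEnd ℂ) (E₂ (t₀, x))
                * lapC (fun y => E₂ (t₀, y)) x).re := by
            funext x; rw [show Λ₂ (t₀, x) = lapC (fun y => E₂ (t₀, y)) x from
              (lapC_joint hE₂' t₀ x).symm]
          rw [hcongr]
          exact integral_re_I_conj_lap (hE₂'.comp (contDiff_const.prodMk contDiff_id)) hR
            (fun x hx => (hsupp t₀ x hx).2)
        rw [hv1, hv2]; ring
      rw [hzero] at key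
      exact key.2
    · exact Eventually.of_forall fun τ =>
        (((hE₁'.continuous.comp (Continuous.prodMk_right τ)).norm.pow 2).add
          ((hE₂'.continuous.comp (Continuous.prodMk_right τ)).norm.pow 2)).aestronglyMeasurable
    · apply Continuous.integrable_of_hasCompactSupport
      · exact ((hE₁'.continuous.comp (Continuous.prodMk_right t₀)).norm.pow 2).add
          ((hE₂'.continuous.comp (Continuous.prodMk_right t₀)).norm.pow 2)
      · apply HasCompactSupport.intro (isCompact_closedBall (0 : R2) R)
        intro x hx
        exact hsupp2 t₀ x (le_of_lt (by simpa [dist_eq_norm] using hx))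
    · exact (hΦc.comp (Continuous.prodMk_right t₀)).aestronglyMeasurable
    · apply ae_of_all
      intro x τ hτ
      show ‖Φ (τ, x)‖ ≤ (closedBall (0 : R2) R).indicator (fun _ => C) x
      rcases le_or_gt ‖x‖ R with hx | hx
      · have hmem : (τ, x) ∈ (Icc (t₀ - 1) (t₀ + 1)) ×ˢ closedBall (0 : R2) R := by
          constructor
          · have := abs_lt.1 (by simpa [Real.dist_eq] using hτ)
            exact ⟨by linarith [this.1], by linarith [this.2]⟩
          · simpa [dist_eq_norm] using hx
        have := hC _ hmem
        rwa [indicator_of_mem (by simpa [dist_eq_norm] using hx)]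
      · rw [hΦ0 τ x hx.le, indicator_of_notMem (by simp [dist_eq_norm]; exact hx)]
        simp
    · rw [integrable_indicator_iff measurableSet_closedBall]
      exact integrableOn_const measure_closedBall_lt_top.ne
    · exact ae_of_all _ fun x τ _ => hderiv τ x
  intro t s
  exact is_const_of_deriv_eq_zero
    (fun τ => (hM τ).differentiableAt) (fun τ => (hM τ).deriv) t s
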